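/- Let $V_0 \preceq V_1 \preceq \cdots \preceq V_n$ be symmetric positive definite $d \times d$ matrices such that each $V_{i} = V_{i-1} + u_i u_i^T$ for some $u_i \in \mathbb{R}^d$. Then for every $\phi \in \mathbb{R}^d$, $\phi^T V_n \phi \leq \frac{\det(V_n)}{\det(V_0)}\, \phi^T V_0 \phi$. -/

import Mathlib

/-!
A rank-one update `V ↦ V + u uᵀ` increases `φᵀ V φ` by `(u ⬝ φ)²`, which by Cauchy–Schwarz for
the inner product `⟪x, y⟫ = xᵀ V y` applied to `V⁻¹ u` and `φ` is at most `(uᵀ V⁻¹ u) (φᵀ V φ)`,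
while by the matrix determinant lemma it multiplies `det V` by exactly `1 + uᵀ V⁻¹ u`.
So `φᵀ Vᵢ φ / det Vᵢ` is nonincreasing in `i`, and comparing `i = n` with `i = 0` gives the bound.
-/

open Matrix

variable {ι : Type*} [Fintype ι] [DecidableEq ι]

theorem Matrix.PosSemidef.dotProduct_mulVec_mul_le {V : Matrix ι ι ℝ} (hV : V.PosSemidef)
    (x y : ι → ℝ) :
    (x ⬝ᵥ (V *ᵥ y)) * (y ⬝ᵥ (V *ᵥ x)) ≤ (x ⬝ᵥ (V *ᵥ x)) * (y ⬝ᵥ (V *ᵥ y)) := by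
  simpa only [toLinearMap₂'_apply'] using
    LinearMap.BilinForm.apply_mul_apply_le_of_forall_zero_le (toLinearMap₂' ℝ V)
      (by simpa only [toLinearMap₂'_apply', star_trivial] using hV.dotProduct_mulVec_nonneg) x y

theorem Matrix.det_add_vecMulVec {R : Type*} [CommRing R] {A : Matrix ι ι R} (hA : IsUnit A.det)
    (u v : ι → R) : (A + vecMulVec u v).det = (1 + v ⬝ᵥ (A⁻¹ *ᵥ u)) * A.det := by
  rw [vecMulVec_eq Unit, det_add_replicateCol_mul_replicateRow hA, Matrix.mul_assoc,
    ← replicateCol_mulVec, det_unique (1 + _), mul_comm]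
  rfl

theorem Matrix.PosDef.sq_dotProduct_le {V : Matrix ι ι ℝ} (hV : V.PosDef) (u φ : ι → ℝ) :
    (u ⬝ᵥ φ) ^ 2 ≤ (u ⬝ᵥ (V⁻¹ *ᵥ u)) * (φ ⬝ᵥ (V *ᵥ φ)) := by
  set w := V⁻¹ *ᵥ u
  have hVw : V *ᵥ w = u := by
    rw [mulVec_mulVec, mul_nonsing_inv _ hV.det_pos.ne'.isUnit, one_mulVec]
  have hVT : Vᵀ = V := (conjTranspose_eq_transpose_of_trivial V).symm.trans hV.isHermitian.eq
  have hwφ : w ⬝ᵥ (V *ᵥ φ) = u ⬝ᵥ φ := by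
    rw [dotProduct_mulVec, ← mulVec_transpose, hVT, hVw]
  have hcs := hV.posSemidef.dotProduct_mulVec_mul_le w φ
  rw [hwφ, hVw, dotProduct_comm φ u, dotProduct_comm w u] at hcs
  rwa [sq]

theorem Matrix.PosDef.dotProduct_mulVec_div_det_add_vecMulVec_self_le {V : Matrix ι ι ℝ}
    (hV : V.PosDef) (u φ : ι → ℝ) :
    φ ⬝ᵥ ((V + vecMulVec u u) *ᵥ φ) / (V + vecMulVec u u).det ≤ φ ⬝ᵥ (V *ᵥ φ) / V.det := by
  have hc : 0 ≤ u ⬝ᵥ (V⁻¹ *ᵥ u) := by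
    simpa only [star_trivial] using hV.inv.posSemidef.dotProduct_mulVec_nonneg u
  have hquad : φ ⬝ᵥ ((V + vecMulVec u u) *ᵥ φ) = φ ⬝ᵥ (V *ᵥ φ) + (u ⬝ᵥ φ) ^ 2 := by
    rw [add_mulVec, dotProduct_add, vecMulVec_mulVec, dotProduct_smul, op_smul_eq_mul,
      dotProduct_comm φ u, sq]
  rw [hquad, det_add_vecMulVec hV.det_pos.ne'.isUnit u u, ← div_div,
    div_le_div_iff_of_pos_right hV.det_pos, div_le_iff₀ (by positivity)]
  nlinarith [hV.sq_dotProduct_le u φ]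

theorem telescoping_rank_one_quadratic_bound {d : ℕ} (n : ℕ)
    (V : ℕ → Matrix (Fin d) (Fin d) ℝ) (u : ℕ → (Fin d → ℝ))
    (hpd : ∀ i ≤ n, (V i).PosDef)
    (hstep : ∀ i < n, V (i + 1) = V i + vecMulVec (u (i + 1)) (u (i + 1)))
    (φ : Fin d → ℝ) :
    φ ⬝ᵥ (V n *ᵥ φ) ≤ ((V n).det / (V 0).det) * (φ ⬝ᵥ (V 0 *ᵥ φ)) := by
  have hratio : ∀ i ≤ n, φ ⬝ᵥ (V i *ᵥ φ) / (V i).det ≤ φ ⬝ᵥ (V 0 *ᵥ φ) / (V 0).det := by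
    intro i hi
    induction i with
    | zero => exact le_rfl
    | succ i ih =>
      rw [hstep i hi]
      exact ((hpd i (by omega)).dotProduct_mulVec_div_det_add_vecMulVec_self_le _ φ).trans
        (ih (by omega))
  have hdet₀ := (hpd 0 n.zero_le).det_pos
  have hfinal := hratio n le_rfl
  rw [div_le_div_iff₀ (hpd n le_rfl).det_pos hdet₀] at hfinal
  rw [div_mul_eq_mul_div, le_div_iff₀ hdet₀]
  linarith
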